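/- Suppose f : [0,1] → ℝ is continuous and admits a jointly continuous local time η. Then for every u ∈ [0,1], 2·∫ᵤ¹ [η(1, f(t)) − η(t, f(t))] dt = ∫_ℝ (η(1,y) − η(u,y))² dy. -/

import Mathlib

open Set MeasureTheory intervalIntegral

/-!
Put `D(s) = ∫ (η(1,y) - η(s,y))² dy - 2 ∫ₛ¹ (η(1,f t) - η(t,f t)) dt`, so that `D(1) = 0`.
Since `(η₁ - ηₛ)² - (η₁ - ηₛ')² = (2η₁ - ηₛ - ηₛ')(ηₛ' - ηₛ)`, the occupation formula applied to
the compactly supported test function `2η₁ - ηₛ - ηₛ'` gives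
`D(s') - D(s) = ∫ₛ^{s'} (η(s,f t) + η(s',f t) - 2η(t,f t)) dt`.
By uniform continuity of `(a,t) ↦ η(a, f t)` on `[0,1]²` this is `o(|s' - s|)` uniformly,
so `D` has zero derivative on `[0,1]` and is therefore constant.
-/

theorem Convex.is_const_of_forall_norm_sub_le_mul {E F : Type*} [NormedAddCommGroup E]
    [NormedSpace ℝ E] [NormedAddCommGroup F] [NormedSpace ℝ F] {s : Set E} {g : E → F}
    (hs : Convex ℝ s)
    (hg : ∀ x ∈ s, ∀ ε > 0, ∃ δ > 0, ∀ y ∈ s, ‖y - x‖ < δ → ‖g y - g x‖ ≤ ε * ‖y - x‖)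
    {x y : E} (hx : x ∈ s) (hy : y ∈ s) : g x = g y := by
  have hderiv : ∀ z ∈ s, HasFDerivWithinAt g (0 : E →L[ℝ] F) s z := by
    intro z hz
    refine .of_isLittleO (Asymptotics.isLittleO_iff.2 fun ε hε => ?_)
    obtain ⟨δ, hδ, h⟩ := hg z hz ε hε
    filter_upwards [inter_mem_nhdsWithin s (Metric.ball_mem_nhds z hδ)] with w ⟨hws, hwδ⟩
    simpa using h w hws (mem_ball_iff_norm.1 hwδ)
  have := hs.norm_image_sub_le_of_norm_hasFDerivWithin_le hderiv (fun _ _ => norm_zero.le) hx hy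
  simpa [sub_eq_zero, eq_comm] using this

theorem hasCompactSupport_of_forall_le_abs {M : Type*} [Zero M] {g : ℝ → M} {C : ℝ}
    (h : ∀ y, C ≤ |y| → g y = 0) : HasCompactSupport g :=
  .intro (isCompact_closedBall 0 C) fun y hy => by
    rw [Metric.mem_closedBall, Real.dist_eq, sub_zero, not_le] at hy
    exact h y hy.le

theorem Continuous.exists_boundedContinuousFunction_of_hasCompactSupport {α β : Type*}
    [TopologicalSpace α] [NormedAddCommGroup β] {g : α → β} (hg : Continuous g)
    (hc : HasCompactSupport g) : ∃ φ : BoundedContinuousFunction α β, ⇑φ = g :=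
  let ⟨C, hC⟩ := hg.bounded_above_of_compact_support hc
  ⟨.ofNormedAddCommGroup g hg C hC, rfl⟩

theorem exists_abs_integral_add_sub_diag_le {a b : ℝ} {g : ℝ → ℝ → ℝ}
    (hg : ContinuousOn (fun p : ℝ × ℝ => g p.1 p.2) (Icc a b ×ˢ Icc a b)) {ε : ℝ} (hε : 0 < ε) :
    ∃ δ > 0, ∀ s ∈ Icc a b, ∀ s' ∈ Icc a b, |s' - s| < δ →
      |∫ t in s..s', (g s t + g s' t - 2 * g t t)| ≤ ε * |s' - s| := by
  obtain ⟨δ, hδ, hclose⟩ := Metric.uniformContinuousOn_iff.1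
    ((isCompact_Icc.prod isCompact_Icc).uniformContinuousOn_of_continuous hg) (ε / 2) (half_pos hε)
  have hclose' : ∀ r ∈ Icc a b, ∀ t ∈ Icc a b, |r - t| < δ → |g r t - g t t| < ε / 2 := by
    intro r hr t ht hrt
    have hdist : dist (r, t) (t, t) < δ := by simpa [Prod.dist_eq, Real.dist_eq, hδ] using hrt
    simpa [Real.dist_eq] using hclose (r, t) ⟨hr, ht⟩ (t, t) ⟨ht, ht⟩ hdist
  refine ⟨δ, hδ, fun s hs s' hs' hss' => ?_⟩
  suffices ∀ t ∈ uIoc s s', ‖g s t + g s' t - 2 * g t t‖ ≤ ε by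
    simpa only [Real.norm_eq_abs] using intervalIntegral.norm_integral_le_of_norm_le_const this
  intro t ht
  have ht' : t ∈ uIcc s s' := uIoc_subset_uIcc ht
  have htI : t ∈ Icc a b := uIcc_subset_Icc hs hs' ht'
  have h1 := hclose' s hs t htI
    (by rw [abs_sub_comm]; exact (abs_sub_left_of_mem_uIcc ht').trans_lt hss')
  have h2 := hclose' s' hs' t htI ((abs_sub_right_of_mem_uIcc ht').trans_lt hss')
  rw [Real.norm_eq_abs]
  calc |g s t + g s' t - 2 * g t t| = |(g s t - g t t) + (g s' t - g t t)| := by ring_nf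
    _ ≤ ε := by linarith [abs_add_le (g s t - g t t) (g s' t - g t t)]

noncomputable def localTimeDefect (f : ℝ → ℝ) (η : ℝ → ℝ → ℝ) (s : ℝ) : ℝ :=
  (∫ y, (η 1 y - η s y) ^ 2) - 2 * ∫ t in s..1, (η 1 (f t) - η t (f t))

section OccupationDensity

variable {f : ℝ → ℝ} {η : ℝ → ℝ → ℝ} {s s' : ℝ}

theorem continuous_of_continuousOn_prod_univ {S : Set ℝ}
    (hη : ContinuousOn (fun p : ℝ × ℝ => η p.1 p.2) (S ×ˢ univ)) (hs : s ∈ S) :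
    Continuous (η s) :=
  continuousOn_univ.1 <| hη.comp (continuous_const.prodMk continuous_id).continuousOn
    fun y _ => mk_mem_prod hs (mem_univ y)

theorem intervalIntegral_comp_eq_integral_mul_sub (hf : ContinuousOn f (Icc 0 1))
    (hcont : ∀ t ∈ Icc (0:ℝ) 1, Continuous (η t))
    (hsupp : ∀ t ∈ Icc (0:ℝ) 1, HasCompactSupport (η t))
    (hocc : ∀ φ : BoundedContinuousFunction ℝ ℝ, ∀ t ∈ Icc (0:ℝ) 1,
      ∫ u in (0:ℝ)..t, φ (f u) = ∫ y : ℝ, φ y * η t y)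
    (φ : BoundedContinuousFunction ℝ ℝ) (hs : s ∈ Icc 0 1) (hs' : s' ∈ Icc 0 1) :
    ∫ t in s..s', φ (f t) = ∫ y, φ y * (η s' y - η s y) := by
  have hφf : ∀ r ∈ Icc (0:ℝ) 1, IntervalIntegrable (fun t => φ (f t)) volume 0 r := fun r hr =>
    ((φ.continuous.comp_continuousOn hf).mono
      (uIcc_subset_Icc (left_mem_Icc.2 zero_le_one) hr)).intervalIntegrable
  have hφη : ∀ r ∈ Icc (0:ℝ) 1, Integrable (fun y => φ y * η r y) := fun r hr =>
    (φ.continuous.mul (hcont r hr)).integrable_of_hasCompactSupport (hsupp r hr).mul_left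
  simp only [mul_sub]
  rw [integral_sub (hφη s' hs') (hφη s hs), ← hocc φ s' hs', ← hocc φ s hs,
    integral_interval_sub_left (hφf s' hs') (hφf s hs)]

theorem integral_sq_sub_sub_integral_sq_sub (hf : ContinuousOn f (Icc 0 1))
    (hcont : ∀ t ∈ Icc (0:ℝ) 1, Continuous (η t))
    (hsupp : ∀ t ∈ Icc (0:ℝ) 1, HasCompactSupport (η t))
    (hocc : ∀ φ : BoundedContinuousFunction ℝ ℝ, ∀ t ∈ Icc (0:ℝ) 1,
      ∫ u in (0:ℝ)..t, φ (f u) = ∫ y : ℝ, φ y * η t y)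
    (hs : s ∈ Icc 0 1) (hs' : s' ∈ Icc 0 1) :
    (∫ y, (η 1 y - η s y) ^ 2) - ∫ y, (η 1 y - η s' y) ^ 2
      = ∫ t in s..s', (2 * η 1 (f t) - η s (f t) - η s' (f t)) := by
  have h1 : (1:ℝ) ∈ Icc 0 1 := right_mem_Icc.2 zero_le_one
  have hsq : ∀ r ∈ Icc (0:ℝ) 1, Integrable (fun y => (η 1 y - η r y) ^ 2) := by
    intro r hr
    have hc : HasCompactSupport fun y => (η 1 y - η r y) ^ 2 :=
      ((hsupp 1 h1).sub (hsupp r hr)).comp_left (g := fun x : ℝ => x ^ 2) (by norm_num)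
    exact (((hcont 1 h1).sub (hcont r hr)).pow 2).integrable_of_hasCompactSupport hc
  have hc : HasCompactSupport fun y => 2 * η 1 y - η s y - η s' y :=
    (((hsupp 1 h1).mul_left (f := fun _ => 2)).sub (hsupp s hs)).sub (hsupp s' hs')
  obtain ⟨φ, hφ⟩ := Continuous.exists_boundedContinuousFunction_of_hasCompactSupport
    (g := fun y => 2 * η 1 y - η s y - η s' y)
    (((continuous_const.mul (hcont 1 h1)).sub (hcont s hs)).sub (hcont s' hs')) hc
  have := intervalIntegral_comp_eq_integral_mul_sub hf hcont hsupp hocc φ hs hs'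
  simp only [hφ] at this
  rw [this, ← integral_sub (hsq s hs) (hsq s' hs')]
  congr 1 with y
  ring

theorem localTimeDefect_sub (hf : ContinuousOn f (Icc 0 1))
    (hcont : ∀ t ∈ Icc (0:ℝ) 1, Continuous (η t))
    (hsupp : ∀ t ∈ Icc (0:ℝ) 1, HasCompactSupport (η t))
    (hocc : ∀ φ : BoundedContinuousFunction ℝ ℝ, ∀ t ∈ Icc (0:ℝ) 1,
      ∫ u in (0:ℝ)..t, φ (f u) = ∫ y : ℝ, φ y * η t y)
    (hηf : ContinuousOn (fun p : ℝ × ℝ => η p.1 (f p.2)) (Icc 0 1 ×ˢ Icc 0 1))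
    (hs : s ∈ Icc 0 1) (hs' : s' ∈ Icc 0 1) :
    localTimeDefect f η s' - localTimeDefect f η s
      = ∫ t in s..s', (η s (f t) + η s' (f t) - 2 * η t (f t)) := by
  have h1 : (1:ℝ) ∈ Icc 0 1 := right_mem_Icc.2 zero_le_one
  have hint : ∀ {g : ℝ → ℝ}, ContinuousOn g (Icc 0 1) →
      ∀ a ∈ Icc (0:ℝ) 1, ∀ b ∈ Icc (0:ℝ) 1, IntervalIntegrable g volume a b :=
    fun hg a ha b hb => (hg.mono (uIcc_subset_Icc ha hb)).intervalIntegrable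
  have hslice : ∀ a ∈ Icc (0:ℝ) 1, ContinuousOn (fun t => η a (f t)) (Icc 0 1) := fun a ha =>
    hηf.comp (continuousOn_const.prodMk continuousOn_id) fun t ht => ⟨ha, ht⟩
  have hdiag : ContinuousOn (fun t => η t (f t)) (Icc 0 1) :=
    hηf.comp (continuousOn_id.prodMk continuousOn_id) fun t ht => ⟨ht, ht⟩
  have hlocal : ContinuousOn (fun t => η 1 (f t) - η t (f t)) (Icc 0 1) := (hslice 1 h1).sub hdiag
  have htime : (∫ t in s..1, (η 1 (f t) - η t (f t))) - ∫ t in s'..1, (η 1 (f t) - η t (f t))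
      = ∫ t in s..s', (η 1 (f t) - η t (f t)) := by
    rw [← integral_add_adjacent_intervals (hint hlocal s hs s' hs') (hint hlocal s' hs' 1 h1)]
    ring
  have hspace := integral_sq_sub_sub_integral_sq_sub hf hcont hsupp hocc hs hs'
  calc localTimeDefect f η s' - localTimeDefect f η s
      = 2 * ((∫ t in s..1, (η 1 (f t) - η t (f t))) - ∫ t in s'..1, (η 1 (f t) - η t (f t)))
        - ((∫ y, (η 1 y - η s y) ^ 2) - ∫ y, (η 1 y - η s' y) ^ 2) := by
        unfold localTimeDefect; ring
    _ = ∫ t in s..s', (2 * (η 1 (f t) - η t (f t))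
          - (2 * η 1 (f t) - η s (f t) - η s' (f t))) := by
        rw [htime, hspace, ← intervalIntegral.integral_const_mul, ← intervalIntegral.integral_sub]
        · exact (hint hlocal s hs s' hs').const_mul 2
        · refine hint ?_ s hs s' hs'
          exact ((continuousOn_const.mul (hslice 1 h1)).sub (hslice s hs)).sub (hslice s' hs')
    _ = ∫ t in s..s', (η s (f t) + η s' (f t) - 2 * η t (f t)) := by
        congr 1 with t
        ring

end OccupationDensity

theorem occupation_density_square_identity_from_general (f : ℝ → ℝ) (η : ℝ → ℝ → ℝ)
    (hf : ContinuousOn f (Icc 0 1))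
    (hη : ContinuousOn (fun p : ℝ × ℝ => η p.1 p.2) (Icc 0 1 ×ˢ univ))
    (hocc : ∀ φ : BoundedContinuousFunction ℝ ℝ, ∀ t ∈ Icc (0:ℝ) 1,
      ∫ u in (0:ℝ)..t, φ (f u) = ∫ y : ℝ, φ y * η t y)
    (hsupp : ∃ C : ℝ, ∀ t ∈ Icc (0:ℝ) 1, ∀ y : ℝ, C ≤ |y| → η t y = 0) :
    ∀ u ∈ Icc (0:ℝ) 1,
      2 * ∫ t in u..1, (η 1 (f t) - η t (f t)) = ∫ y : ℝ, (η 1 y - η u y) ^ 2 := by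
  intro u hu
  obtain ⟨C, hC⟩ := hsupp
  have hcont : ∀ t ∈ Icc (0:ℝ) 1, Continuous (η t) := fun t ht =>
    continuous_of_continuousOn_prod_univ hη ht
  have hcs : ∀ t ∈ Icc (0:ℝ) 1, HasCompactSupport (η t) := fun t ht =>
    hasCompactSupport_of_forall_le_abs (hC t ht)
  have hηf : ContinuousOn (fun p : ℝ × ℝ => η p.1 (f p.2)) (Icc 0 1 ×ˢ Icc 0 1) :=
    hη.comp (continuousOn_fst.prodMk (hf.comp continuousOn_snd fun p hp => hp.2))
      fun p hp => ⟨hp.1, mem_univ _⟩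
  have hconst : localTimeDefect f η u = localTimeDefect f η 1 := by
    refine (convex_Icc 0 1).is_const_of_forall_norm_sub_le_mul (fun s hs ε hε => ?_) hu
      (right_mem_Icc.2 zero_le_one)
    obtain ⟨δ, hδ, hsmall⟩ := exists_abs_integral_add_sub_diag_le
      (g := fun a t => η a (f t)) hηf hε
    refine ⟨δ, hδ, fun s' hs' hss' => ?_⟩
    rw [localTimeDefect_sub hf hcont hcs hocc hηf hs hs']
    exact hsmall s hs s' hs' hss'
  have hdefect_one : localTimeDefect f η 1 = 0 := by simp [localTimeDefect]
  rw [hdefect_one, localTimeDefect, sub_eq_zero] at hconst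
  exact hconst.symm

/-- If `f` is continuous on `[0,1]` with a jointly continuous local time `η`
vanishing for `|y|` large, then for every `u ∈ [0,1]`,
`2·∫ᵤ¹ (η(1, f(t)) − η(t, f(t))) dt = ∫_ℝ (η(1,y) − η(u,y))² dy`. -/
theorem occupation_density_square_identity_from (f : ℝ → ℝ) (η : ℝ → ℝ → ℝ)
    (hf : ContinuousOn f (Icc 0 1))
    (hη : ContinuousOn (fun p : ℝ × ℝ => η p.1 p.2) (Icc 0 1 ×ˢ univ))
    (hηnonneg : ∀ t ∈ Icc (0:ℝ) 1, ∀ y : ℝ, 0 ≤ η t y)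
    (hocc : ∀ φ : BoundedContinuousFunction ℝ ℝ, ∀ t ∈ Icc (0:ℝ) 1,
      ∫ u in (0:ℝ)..t, φ (f u) = ∫ y : ℝ, φ y * η t y)
    (hsupp : ∃ C : ℝ, ∀ t ∈ Icc (0:ℝ) 1, ∀ y : ℝ, C ≤ |y| → η t y = 0) :
    ∀ u ∈ Icc (0:ℝ) 1,
      2 * ∫ t in u..1, (η 1 (f t) - η t (f t)) = ∫ y : ℝ, (η 1 y - η u y) ^ 2 :=
  occupation_density_square_identity_from_general f η hf hη hocc hsupp
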